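/- arXiv:1604.01128 — 2 statements merged into one kernel-verified Lean document; each statement's English description precedes it below -/
import Mathlib

section
/- The function φ2 is three times continuously differentiable on [0,L] and satisfies the boundary value problem: φ2'(x) + φ2'''(x) = q·φ1(x) for all x ∈ [0,L], together with the boundary conditions φ2(0) = φ2(L) = 0 and φ2'(0) = φ2'(L) = 0. -/
noncomputable def L : ℝ := 2 * Real.pi * Real.sqrt (7 / 3)

noncomputable def q : ℝ := 20 / (21 * Real.sqrt 21)

noncomputable def Θ : ℝ := (1 / Real.sqrt (14 * Real.pi)) * (3 / 7 : ℝ) ^ ((1 : ℝ) / 4)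

noncomputable def φ1 (x : ℝ) : ℝ :=
  Θ * (Real.cos (5 * x / Real.sqrt 21) - 3 * Real.cos (x / Real.sqrt 21)
      + 2 * Real.cos (4 * x / Real.sqrt 21))

noncomputable def φ2 (x : ℝ) : ℝ :=
  Θ * (-Real.sin (5 * x / Real.sqrt 21) - 3 * Real.sin (x / Real.sqrt 21)
      + 2 * Real.sin (4 * x / Real.sqrt 21))

/-!
Each summand of `φ2` is a mode `sin (ω x)` with `ω = k / √21`, `k ∈ {5, 1, 4}`, which
`d/dx + d³/dx³` sends to `ω (1 - ω²) cos (ω x)`; the factor `ω (1 - ω²) = k (21 - k²) / (21√21)`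
equals `-q`, `q`, `q` for `k = 5, 1, 4`, which turns the combination of sines in `φ2` into `q φ1`.
At the right end, `θ = L / √21 = 2π/3` satisfies `4θ ≡ θ` and `5θ ≡ -θ (mod 2π)`, so the
boundary values reduce to the coefficient sums `1 - 3 + 2 = 0` and `-5 - 3 + 8 = 0`.
-/

open Real

lemma φ2_eq : φ2 = fun x =>
    Θ * (-sin (5 / √21 * x) - 3 * sin (1 / √21 * x) + 2 * sin (4 / √21 * x)) := by
  ext x; simp only [φ2, div_mul_eq_mul_div, one_mul]

lemma iteratedDeriv_φ2 (n : ℕ) (x : ℝ) :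
    iteratedDeriv n φ2 x = Θ * (-((5 / √21) ^ n * iteratedDeriv n sin (5 / √21 * x))
      - 3 * ((1 / √21) ^ n * iteratedDeriv n sin (1 / √21 * x))
      + 2 * ((4 / √21) ^ n * iteratedDeriv n sin (4 / √21 * x))) := by
  rw [φ2_eq, iteratedDeriv_const_mul_field, iteratedDeriv_fun_add (by fun_prop) (by fun_prop),
    iteratedDeriv_fun_sub (by fun_prop) (by fun_prop), iteratedDeriv_fun_neg,
    iteratedDeriv_const_mul_field, iteratedDeriv_const_mul_field,
    iteratedDeriv_comp_const_mul contDiff_sin, iteratedDeriv_comp_const_mul contDiff_sin,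
    iteratedDeriv_comp_const_mul contDiff_sin]

lemma sqrt_21_pow_three : √21 ^ 3 = 21 * √21 := by
  rw [pow_succ, sq_sqrt (by norm_num)]

lemma deriv_φ2 (x : ℝ) : deriv φ2 x = Θ / √21 *
    (-5 * cos (5 * x / √21) - 3 * cos (x / √21) + 8 * cos (4 * x / √21)) := by
  rw [← iteratedDeriv_one, iteratedDeriv_φ2]
  simp only [iteratedDeriv_one, Real.deriv_sin, div_mul_eq_mul_div, one_mul, pow_one]
  ring

lemma iteratedDeriv_three_φ2 (x : ℝ) : iteratedDeriv 3 φ2 x = Θ / (21 * √21) *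
    (125 * cos (5 * x / √21) + 3 * cos (x / √21) - 128 * cos (4 * x / √21)) := by
  rw [iteratedDeriv_φ2]
  simp only [iteratedDeriv_add_one_sin, iteratedDeriv_add_one_cos, iteratedDeriv_one,
    Real.deriv_sin, Pi.neg_apply, div_mul_eq_mul_div, one_mul, div_pow, sqrt_21_pow_three]
  ring

lemma three_mul_L_div_sqrt_21 : 3 * (L / √21) = 2 * π := by
  have : √(7 / 3) / √21 = 1 / 3 := by
    rw [← sqrt_div (by norm_num), show (7 / 3 : ℝ) / 21 = (1 / 3) ^ 2 by norm_num,
      sqrt_sq (by norm_num)]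
  rw [L, mul_div_assoc, this]
  ring

theorem deriv_add_iteratedDeriv_three_φ2 (x : ℝ) :
    deriv φ2 x + iteratedDeriv 3 φ2 x = q * φ1 x := by
  rw [deriv_φ2, iteratedDeriv_three_φ2, q, φ1]
  field_simp
  ring

lemma sin_four_mul_of_three_mul_eq_two_pi {θ : ℝ} (hθ : 3 * θ = 2 * π) :
    sin (4 * θ) = sin θ := by
  rw [show 4 * θ = θ + 2 * π by linarith, sin_add_two_pi]

lemma cos_four_mul_of_three_mul_eq_two_pi {θ : ℝ} (hθ : 3 * θ = 2 * π) :
    cos (4 * θ) = cos θ := by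
  rw [show 4 * θ = θ + 2 * π by linarith, cos_add_two_pi]

lemma sin_five_mul_of_three_mul_eq_two_pi {θ : ℝ} (hθ : 3 * θ = 2 * π) :
    sin (5 * θ) = -sin θ := by
  rw [show 5 * θ = 2 * π - θ + 2 * π by linarith, sin_add_two_pi, sin_two_pi_sub]

lemma cos_five_mul_of_three_mul_eq_two_pi {θ : ℝ} (hθ : 3 * θ = 2 * π) :
    cos (5 * θ) = cos θ := by
  rw [show 5 * θ = 2 * π - θ + 2 * π by linarith, cos_add_two_pi, cos_two_pi_sub]

/-- φ2 is C³ on [0,L] and satisfies φ2' + φ2''' = q·φ1 on [0,L],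
with boundary conditions φ2(0) = φ2(L) = 0 and φ2'(0) = φ2'(L) = 0. -/
theorem stmt_1 :
    ContDiffOn ℝ 3 φ2 (Set.Icc 0 L) ∧
    (∀ x ∈ Set.Icc (0 : ℝ) L, deriv φ2 x + iteratedDeriv 3 φ2 x = q * φ1 x) ∧
    φ2 0 = 0 ∧ φ2 L = 0 ∧ deriv φ2 0 = 0 ∧ deriv φ2 L = 0 := by
  have hL := three_mul_L_div_sqrt_21
  refine ⟨by unfold φ2; fun_prop, fun x _ => deriv_add_iteratedDeriv_three_φ2 x,
    by simp [φ2], ?_, by norm_num [deriv_φ2], ?_⟩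
  · rw [φ2, mul_div_assoc, mul_div_assoc, sin_four_mul_of_three_mul_eq_two_pi hL,
      sin_five_mul_of_three_mul_eq_two_pi hL]
    ring
  · rw [deriv_φ2, mul_div_assoc, mul_div_assoc, cos_four_mul_of_three_mul_eq_two_pi hL,
      cos_five_mul_of_three_mul_eq_two_pi hL]
    ring
end

section
/- If h : [0,L] → ℝ is three times continuously differentiable and satisfies h'(x) + h'''(x) = 0 for all x ∈ [0,L] together with the boundary conditions h(0) = h(L) = 0 and h'(L) = 0, then h is identically zero. That is, 0 is not an eigenvalue of the operator φ ↦ −φ' − φ''' with these boundary conditions. -/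
/-!
The quantity `h + h''` has derivative `h' + h''' = 0`, so it is a constant `c`, and `f = h - c`
solves `f'' = -f`. The pair `(f, f')` therefore rotates by the angle `x`:
`(f, f')(x) = R_x (f, f')(0)`. The boundary conditions say `f L = f 0` and `f' L = 0`; since
`√(7/3)` is not an integer, `cos L ≠ 1`, and this linear system forces `f 0 = f' 0 = 0`.
Hence `c = -f 0 = 0` and `h = f = 0`.
-/

open Real Set

theorem Convex.eq_of_hasDerivWithinAt_zero {E : Type*} [NormedAddCommGroup E] [NormedSpace ℝ E]
    {s : Set ℝ} {f : ℝ → E} {x y : ℝ} (hs : Convex ℝ s)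
    (hf : ∀ z ∈ s, HasDerivWithinAt f 0 s z) (hx : x ∈ s) (hy : y ∈ s) : f x = f y := by
  have := hs.norm_image_sub_le_of_norm_hasDerivWithin_le hf (fun _ _ => norm_zero.le) hy hx
  rwa [zero_mul, norm_le_zero_iff, sub_eq_zero] at this

theorem ContDiffOn.hasDerivWithinAt_iteratedDerivWithin {s : Set ℝ} {f : ℝ → ℝ} {n k : ℕ}
    {x : ℝ} (hf : ContDiffOn ℝ n f s) (hs : UniqueDiffOn ℝ s) (hk : k < n) (hx : x ∈ s) :
    HasDerivWithinAt (iteratedDerivWithin k f s) (iteratedDerivWithin (k + 1) f s x) s x := by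
  rw [iteratedDerivWithin_succ]
  exact (hf.differentiableOn_iteratedDerivWithin (by exact_mod_cast hk) hs x hx).hasDerivWithinAt

section Harmonic

variable {s : Set ℝ} {f g : ℝ → ℝ} {x₀ : ℝ}

theorem Convex.eq_zero_of_harmonic (hs : Convex ℝ s)
    (hf : ∀ x ∈ s, HasDerivWithinAt f (g x) s x) (hg : ∀ x ∈ s, HasDerivWithinAt g (-f x) s x)
    (hx₀ : x₀ ∈ s) (hf₀ : f x₀ = 0) (hg₀ : g x₀ = 0) : ∀ x ∈ s, f x = 0 := by
  intro x hx
  have henergy : ∀ z ∈ s, HasDerivWithinAt (fun y => f y ^ 2 + g y ^ 2) 0 s z := fun z hz =>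
    (((hf z hz).pow 2).add ((hg z hz).pow 2)).congr_deriv (by ring)
  have hconst := hs.eq_of_hasDerivWithinAt_zero henergy hx hx₀
  simp only [hf₀, hg₀] at hconst
  nlinarith [sq_nonneg (f x), sq_nonneg (g x)]

theorem Convex.eq_cos_add_sin_of_harmonic (hs : Convex ℝ s)
    (hf : ∀ x ∈ s, HasDerivWithinAt f (g x) s x) (hg : ∀ x ∈ s, HasDerivWithinAt g (-f x) s x)
    (hx₀ : x₀ ∈ s) : ∀ x ∈ s, f x = f x₀ * cos (x - x₀) + g x₀ * sin (x - x₀) := by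
  have hcos : ∀ x, HasDerivAt (fun y => cos (y - x₀)) (-sin (x - x₀)) x := fun x =>
    by simpa using ((hasDerivAt_id' x).sub_const x₀).cos
  have hsin : ∀ x, HasDerivAt (fun y => sin (y - x₀)) (cos (x - x₀)) x := fun x =>
    by simpa using ((hasDerivAt_id' x).sub_const x₀).sin
  have key := hs.eq_zero_of_harmonic
    (f := fun x => f x - (f x₀ * cos (x - x₀) + g x₀ * sin (x - x₀)))
    (g := fun x => g x - (g x₀ * cos (x - x₀) - f x₀ * sin (x - x₀)))
    (fun x hx => ((hf x hx).sub
      (((hcos x).const_mul _).add ((hsin x).const_mul _)).hasDerivWithinAt).congr_deriv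
        (by ring))
    (fun x hx => ((hg x hx).sub
      (((hcos x).const_mul _).sub ((hsin x).const_mul _)).hasDerivWithinAt).congr_deriv
        (by ring))
    hx₀ (by simp) (by simp)
  exact fun x hx => sub_eq_zero.1 (key x hx)

end Harmonic

theorem eq_zero_of_rotation (p q θ : ℝ) (hθ : cos θ ≠ 1)
    (hp : p * cos θ + q * sin θ = p) (hq : q * cos θ - p * sin θ = 0) : p = 0 ∧ q = 0 := by
  have hθ' : 1 - cos θ ≠ 0 := sub_ne_zero.2 hθ.symm
  have hpyth := sin_sq_add_cos_sq θ
  constructor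
  · refine (mul_eq_zero.1 ?_).resolve_right hθ'
    linear_combination cos θ * hp - sin θ * hq - p * hpyth
  · refine (mul_eq_zero.1 ?_).resolve_right hθ'
    linear_combination sin θ * hp + (cos θ - 1) * hq - q * hpyth

theorem L_pos : 0 < L := by unfold L; positivity

theorem cos_L_ne_one : cos L ≠ 1 := by
  rw [Ne, cos_eq_one_iff]
  rintro ⟨n, hn⟩
  have hsqrt : √(7 / 3) = n := by
    unfold L at hn
    nlinarith [pi_pos]
  have h1 : (1 : ℝ) < n := hsqrt ▸ (lt_sqrt zero_le_one).2 (by norm_num)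
  have h2 : (n : ℝ) < 2 := hsqrt ▸ (sqrt_lt' two_pos).2 (by norm_num)
  have : (1 : ℤ) < n ∧ n < 2 := ⟨by exact_mod_cast h1, by exact_mod_cast h2⟩
  omega

/-- 0 is not an eigenvalue of φ ↦ −φ' − φ''' with boundary conditions
φ(0) = φ(L) = 0, φ'(L) = 0: any C³ solution of h' + h''' = 0 on [0,L] with these
boundary conditions vanishes identically on [0,L]. -/
theorem stmt_8 (h : ℝ → ℝ)
    (hreg : ContDiffOn ℝ 3 h (Set.Icc 0 L))
    (hode : ∀ x ∈ Set.Icc (0 : ℝ) L,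
      iteratedDerivWithin 1 h (Set.Icc 0 L) x + iteratedDerivWithin 3 h (Set.Icc 0 L) x = 0)
    (h0 : h 0 = 0) (hL : h L = 0)
    (hL' : iteratedDerivWithin 1 h (Set.Icc 0 L) L = 0) :
    ∀ x ∈ Set.Icc (0 : ℝ) L, h x = 0 := by
  set s := Icc 0 L
  set D := fun k => iteratedDerivWithin k h s
  have hs : Convex ℝ s := convex_Icc 0 L
  have h0s : (0 : ℝ) ∈ s := left_mem_Icc.2 L_pos.le
  have hLs : L ∈ s := right_mem_Icc.2 L_pos.le
  have hD k (hk : k < 3) x (hx : x ∈ s) : HasDerivWithinAt (D k) (D (k + 1) x) s x :=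
    hreg.hasDerivWithinAt_iteratedDerivWithin (uniqueDiffOn_Icc L_pos) hk hx
  have hD0 : D 0 = h := iteratedDerivWithin_zero
  set c := D 2 0
  have hconst : ∀ x ∈ s, h x + D 2 x = c := fun x hx => by
    simpa [hD0, h0] using hs.eq_of_hasDerivWithinAt_zero
      (fun z hz => ((hD 0 (by norm_num) z hz).add (hD 2 (by norm_num) z hz)).congr_deriv
        (hode z hz)) hx h0s
  have hf x (hx : x ∈ s) : HasDerivWithinAt (fun y => h y - c) (D 1 x) s x :=
    (hD0 ▸ hD 0 (by norm_num) x hx).sub_const c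
  have hg x (hx : x ∈ s) : HasDerivWithinAt (D 1) (-(h x - c)) s x :=
    (hD 1 (by norm_num) x hx).congr_deriv (by linarith [hconst x hx])
  have hfL := hs.eq_cos_add_sin_of_harmonic hf hg h0s L hLs
  have hgL := hs.eq_cos_add_sin_of_harmonic hg (fun x hx => (hf x hx).neg) h0s L hLs
  obtain ⟨hc, hD1⟩ := eq_zero_of_rotation (h 0 - c) (D 1 0) L cos_L_ne_one
    (by simpa [hL, h0] using hfL.symm) (by simp only [sub_zero] at hgL; linarith [hL'])
  intro x hx
  have := hs.eq_cos_add_sin_of_harmonic hf hg h0s x hx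
  rw [hc, hD1] at this
  linarith
end
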